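/- Let n = 2m and suppose φ is an automorphism of the Grassmannian Gr_m(V), dim V = 2m, induced by an isomorphism ψ : V* → V (i.e., φ(H) = ψ(H^⊥)), and suppose φ is an involution on Gr_m(V). Then the matrix A = ψ ∘ χ (with χ defined by u(χ(v)) = v(ψ⁻¹(u))) is a scalar c·I with c² = 1, and the bilinear form ⟨u,v⟩ = u(ψ⁻¹(v)) on V is symmetric if c = 1 and alternating (symplectic) if c = -1. -/

import Mathlib

/-!
For an `m`-dimensional `H`, the map `A = ψ ∘ χ` sends `H` into `ψ((ψ(H^⊥))^⊥)`, which is `H`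
because `φ` is an involution. An endomorphism preserving every subspace of a fixed dimension
`0 < k < dim V` is a scalar `c`: if `v` and `A v` were independent, some `k`-dimensional subspace
would contain `v` but not `A v`. Then `⟨u,v⟩ = c ⟨v,u⟩`, and applying this twice gives `c² = 1`.
-/

open Module Submodule

theorem Submodule.map_le_dualAnnihilator_map_dualAnnihilator {R M : Type*} [CommRing R]
    [AddCommGroup M] [Module R M] (ψ : Dual R M ≃ₗ[R] M) (χ : M →ₗ[R] Dual R M)
    (hχ : ∀ u v : M, χ v u = ψ.symm u v) (H : Submodule R M) :
    H.map χ ≤ (H.dualAnnihilator.map (ψ : Dual R M →ₗ[R] M)).dualAnnihilator := by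
  rintro _ ⟨v, hv, rfl⟩
  rw [mem_dualAnnihilator]
  rintro _ ⟨g, hg, rfl⟩
  rw [hχ, LinearEquiv.coe_coe, ψ.symm_apply_apply]
  exact (mem_dualAnnihilator g).mp hg v hv

section

variable {K V : Type*} [Field K] [AddCommGroup V] [Module K V]

theorem Submodule.exists_le_disjoint_finrank_eq [FiniteDimensional K V] {N L : Submodule K V}
    (hNL : Disjoint N L) {k : ℕ} (hN : finrank K N ≤ k) (hk : k + finrank K L ≤ finrank K V) :
    ∃ H : Submodule K V, N ≤ H ∧ Disjoint H L ∧ finrank K H = k := by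
  induction k, hN using Nat.le_induction with
  | base => exact ⟨N, le_rfl, hNL, rfl⟩
  | succ k _ ih =>
    obtain ⟨H, hNH, hHL, hH⟩ := ih (by omega)
    have hsup : finrank K ↥(H ⊔ L) < finrank K V := by
      have := Submodule.finrank_sup_add_finrank_inf_eq H L
      rw [hHL.eq_bot, finrank_bot] at this
      omega
    obtain ⟨z, -, hz⟩ := SetLike.exists_of_lt (Submodule.lt_top_of_finrank_lt_finrank hsup)
    refine ⟨H ⊔ K ∙ z, le_sup_of_le_left hNH, ?_, ?_⟩
    · refine (hHL.symm.disjoint_sup_right_of_disjoint_sup_left ?_).symm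
      rw [sup_comm]
      exact disjoint_span_singleton_of_notMem hz
    · rw [finrank_sup_span_singleton fun hzH ↦ hz (mem_sup_left hzH), hH]

theorem LinearMap.exists_eq_smul_id_of_forall_finrank_eq_map_le [FiniteDimensional K V]
    (f : V →ₗ[K] V) {k : ℕ} (hk₀ : 0 < k) (hk : k < finrank K V)
    (h : ∀ H : Submodule K V, finrank K H = k → H.map f ≤ H) :
    ∃ c : K, ∀ v, f v = c • v := by
  suffices ∃ c : K, f = c • 1 from this.imp fun c hc v ↦ by simp [hc]
  refine f.exists_eq_smul_id_of_forall_notLinearIndependent fun v hind ↦ ?_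
  have hv : v ≠ 0 := hind.ne_zero 0
  have hfv : f v ∉ K ∙ v := by
    simpa [mem_span_singleton] using (LinearIndependent.pair_iff' hv).mp hind
  have hfv₀ : f v ≠ 0 := fun h ↦ hfv (h ▸ zero_mem _)
  obtain ⟨H, hvH, hH, hHk⟩ := exists_le_disjoint_finrank_eq (k := k)
    (disjoint_span_singleton_of_notMem hfv)
    (by rw [finrank_span_singleton hv]; omega)
    (by rw [finrank_span_singleton hfv₀]; omega)
  have hfvH : f v ∈ H := h H hHk (mem_map_of_mem (hvH (mem_span_singleton_self v)))
  exact hfv₀ (disjoint_def.mp hH _ hfvH (mem_span_singleton_self _))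

theorem LinearMap.sq_eq_one_of_eq_smul_flip {B : V →ₗ[K] V →ₗ[K] K} (hB : B ≠ 0) {c : K}
    (h : B = c • B.flip) : c ^ 2 = 1 := by
  have hflip : B.flip = c • B := by
    conv_lhs => rw [h]
    ext; simp
  have hB2 : (c ^ 2 - 1) • B = 0 := by
    rw [sub_smul (c ^ 2) 1 B, one_smul, sub_eq_zero, pow_two, mul_smul, ← hflip, ← h]
  simpa [sub_eq_zero, hB] using hB2

end

/-- Let `dim V = 2m` and let `φ` be the automorphism of the Grassmannian
`Gr_m(V)` induced by an isomorphism `ψ : V* → V`, i.e. `φ(H) = ψ(H^⊥)`; suppose `φ` is an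
involution on `Gr_m(V)`.  With `χ : V → V*` defined by `u(χ(v)) = v(ψ⁻¹(u))` and
`A = ψ ∘ χ`, the map `A` is a scalar `c • I` with `c² = 1`, and the bilinear form
`⟨u,v⟩ = u(ψ⁻¹(v))` on `V` is symmetric if `c = 1` and alternating if `c = -1`. -/
theorem stmt17 {V : Type*} [AddCommGroup V] [Module ℂ V] [FiniteDimensional ℂ V]
    (m : ℕ) (hm : 0 < m) (hV : Module.finrank ℂ V = 2 * m)
    (ψ : Module.Dual ℂ V ≃ₗ[ℂ] V)
    (χ : V →ₗ[ℂ] Module.Dual ℂ V)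
    (hχ : ∀ u v : V, χ v u = ψ.symm u v)
    (hinv : ∀ H : Submodule ℂ V, Module.finrank ℂ H = m →
      (((H.dualAnnihilator.map (ψ : Module.Dual ℂ V →ₗ[ℂ] V)).dualAnnihilator).map
        (ψ : Module.Dual ℂ V →ₗ[ℂ] V)) = H) :
    ∃ c : ℂ, (∀ v : V, ψ (χ v) = c • v) ∧ c ^ 2 = 1 ∧
      (c = 1 → ∀ u v : V, ψ.symm v u = ψ.symm u v) ∧
      (c = -1 → ∀ u v : V, ψ.symm v u = - ψ.symm u v) := by
  have hA (H : Submodule ℂ V) (hH : finrank ℂ H = m) :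
      H.map ((ψ : Dual ℂ V →ₗ[ℂ] V) ∘ₗ χ) ≤ H := by
    rw [map_comp]
    conv_rhs => rw [← hinv H hH]
    exact map_mono (map_le_dualAnnihilator_map_dualAnnihilator ψ χ hχ H)
  obtain ⟨c, hc⟩ := LinearMap.exists_eq_smul_id_of_forall_finrank_eq_map_le _ hm (by omega) hA
  have hB : (ψ.symm : V →ₗ[ℂ] Dual ℂ V) = c • (ψ.symm : V →ₗ[ℂ] Dual ℂ V).flip := by
    ext u v
    have hχv : χ v = c • ψ.symm v := by
      rw [← LinearEquiv.map_smul, ← hc v]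
      simp
    simp [← hχ, hχv]
  have : Nontrivial V := Module.nontrivial_of_finrank_pos (R := ℂ) (by omega)
  have hψ : (ψ.symm : V →ₗ[ℂ] Dual ℂ V) ≠ 0 := fun h ↦ by
    obtain ⟨v, hv⟩ := exists_ne (0 : V)
    exact hv (ψ.symm.injective (by simpa using congr($h v)))
  have hrel (u v : V) : ψ.symm v u = c * ψ.symm u v := by simpa using congr($hB v u)
  refine ⟨c, hc, LinearMap.sq_eq_one_of_eq_smul_flip hψ hB, ?_, ?_⟩
  · rintro rfl u v; simpa using hrel u v
  · rintro rfl u v; simpa using hrel u v
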